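/- For every H ∈ (0,1) and every x ∈ [0,1], one has R_H(x) ≥ 0, where R_H(x) = 1 − 2Hx − (1−x)^{2H}(1−x²) + 2Hx^{2H+1} − x^{2+2H}. -/
import Mathlib


/-- The function `R_H` of formula (21). -/
noncomputable def RH (H x : ℝ) : ℝ :=
  1 - 2*H*x - (1-x) ^ (2*H) * (1 - x^2) + 2*H*x ^ (2*H+1) - x ^ (2+2*H)

/-- chord bound: for `y ∈ [0,1]` and `s ∈ [0,1]`, `y ^ s ≤ (1-s) + s*y`. -/
lemma rpow_le_chord {y s : ℝ} (hy0 : 0 ≤ y) (hs0 : 0 ≤ s) (hs1 : s ≤ 1) :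
    y ^ s ≤ (1 - s) + s * y := by
  have := Real.geom_mean_le_arith_mean2_weighted (by linarith : (0:ℝ) ≤ 1 - s) hs0
    (zero_le_one) hy0 (by ring)
  simpa [Real.one_rpow] using this

/-- Admission 1 of Lemma 2: `R_H(x) ≥ 0` for every `H ∈ (0,1)`
and every `x ∈ [0,1]`. -/
theorem statement6 (H x : ℝ) (hH : H ∈ Set.Ioo (0:ℝ) 1) (hx : x ∈ Set.Icc (0:ℝ) 1) :
    0 ≤ RH H x := by
  obtain ⟨hH0, hH1⟩ := hH
  obtain ⟨hx0, hx1⟩ := hx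
  rcases eq_or_lt_of_le hx0 with h0 | h0
  · -- x = 0
    simp [RH, ← h0, Real.zero_rpow (by positivity : 2*H+1 ≠ 0),
      Real.zero_rpow (by positivity : (2:ℝ)+2*H ≠ 0), Real.one_rpow]
  rcases eq_or_lt_of_le hx1 with h1 | h1
  · -- x = 1
    subst h1
    norm_num [RH, Real.one_rpow]
  -- now 0 < x < 1
  set a := 2*H with ha
  have ha0 : 0 < a := by positivity
  have ha2 : a < 2 := by rw [ha]; linarith
  have hy0 : 0 < 1 - x := by linarith
  have key : RH H x = (1-x^2)*(1-(1-x)^a) - x*(a-x)*(1-x^a) := by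
    simp only [RH, ← ha]
    rw [show a + 1 = a + (1:ℝ) from rfl, Real.rpow_add h0, Real.rpow_one,
      Real.rpow_add h0 2 a, show x^(2:ℝ) = x^2 by
        rw [show (2:ℝ) = ((2:ℕ):ℝ) by norm_num, Real.rpow_natCast]]
    ring
  rw [key]
  have hu1 : x ^ a ≤ 1 := Real.rpow_le_one h0.le h1.le ha0.le
  have hv1 : (1-x) ^ a ≤ 1 := Real.rpow_le_one hy0.le (by linarith) ha0.le
  have hu0 : 0 ≤ x ^ a := Real.rpow_nonneg h0.le a
  have hv0 : 0 ≤ (1-x) ^ a := Real.rpow_nonneg hy0.le a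
  rcases le_total a 1 with ha1 | ha1
  · -- a ≤ 1
    rcases le_total x a with hxa | hxa
    · -- x ≤ a : use (1-x)^a ≤ 1 - a x and x ≤ x^a
      have hvb : (1-x)^a ≤ 1 - a*x := by
        have := rpow_le_chord hy0.le ha0.le ha1
        linarith [this]
      have hub : x ≤ x ^ a := by
        have := Real.rpow_le_rpow_of_exponent_ge h0 h1.le ha1
        rwa [Real.rpow_one] at this
      have t1 : 0 ≤ (1 - x^2) * ((1 - a*x) - (1-x)^a) :=
        mul_nonneg (by nlinarith) (by linarith)
      have t2 : 0 ≤ (x * (a - x)) * (x^a - x) :=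
        mul_nonneg (mul_nonneg h0.le (by linarith)) (by linarith)
      nlinarith [t1, t2, mul_pos h0 h0, sq_nonneg x, mul_pos (mul_pos h0 h0) hy0]
    · -- a ≤ x : both terms nonnegative
      have t1 : 0 ≤ (1 - x^2) * (1 - (1-x)^a) :=
        mul_nonneg (by nlinarith) (by linarith)
      have t2 : 0 ≤ (x * (x - a)) * (1 - x^a) :=
        mul_nonneg (mul_nonneg h0.le (by linarith)) (by linarith)
      nlinarith [t1, t2]
  · -- 1 ≤ a
    have hxa : x ≤ a := le_trans h1.le ha1
    have hub : x^2 ≤ x ^ a := by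
      have := Real.rpow_le_rpow_of_exponent_ge h0 h1.le ha2.le
      rwa [show x^(2:ℝ) = x^2 by
        rw [show (2:ℝ) = ((2:ℕ):ℝ) by norm_num, Real.rpow_natCast]] at this
    have hvb : (1-x)^a ≤ (1-x) * ((2-a) + (a-1)*(1-x)) := by
      have h2 : (1-x)^a = (1-x) * (1-x)^(a-1) := by
        rw [show a = 1 + (a-1) by ring, Real.rpow_add hy0, Real.rpow_one]
        ring_nf
      rw [h2]
      have hc : (1-x)^(a-1) ≤ (2-a) + (a-1)*(1-x) := by
        have := rpow_le_chord hy0.le (by linarith : (0:ℝ) ≤ a-1) (by linarith)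
        convert this using 2 <;> ring
      exact mul_le_mul_of_nonneg_left hc hy0.le
    have t1 : 0 ≤ (1 - x^2) * ((1-x) * ((2-a) + (a-1)*(1-x)) - (1-x)^a) :=
      mul_nonneg (by nlinarith) (by linarith)
    have t2 : 0 ≤ (x * (a - x)) * (x^a - x^2) :=
      mul_nonneg (mul_nonneg h0.le (by linarith)) (by linarith)
    nlinarith [t1, t2, mul_pos (mul_pos h0 h0) hy0, sq_nonneg x,
      mul_nonneg (mul_nonneg (sq_nonneg x) hy0.le) (by linarith : (0:ℝ) ≤ 2-a)]
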